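/- Abstract forward-model theorem: Let State, Info, Task, and Control be types, and let trials be a set of pairs (s, i) ∈ State × Info realized by a controller (i.e., a set R ⊆ State × Info). Suppose the controller's output is a function B : Info × Task → Control, and correctness holds: for every (s, i) ∈ R and every task τ, B(i, τ) ∈ Sol(s, τ), where Sol(s, τ) ⊆ Control is the set of correct initial controls for task τ from state s. Assume the no-NSCTP condition: for any two distinct states s ≠ s', there exists a task τ with Sol(s, τ) ∩ Sol(s', τ) = ∅. Then there exists a function F : Info → State such that F(i) = s for every (s, i) ∈ R; i.e., the state is uniquely determined by the controller's information. -/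
import Mathlib

/-- Abstract forward-model theorem: a correct controller on a system with no NSCTP
pairs determines the state as a function of its information. -/
theorem stmt_14 {State Info Task Control : Type*} [Nonempty State]
    (Sol : State → Task → Set Control)
    (hSol : ∀ s τ, (Sol s τ).Nonempty)
    (R : Set (State × Info)) (B : Info → Task → Control)
    (hcorr : ∀ p ∈ R, ∀ τ : Task, B p.2 τ ∈ Sol p.1 τ)
    (hsep : ∀ s s' : State, s ≠ s' → ∃ τ : Task, Sol s τ ∩ Sol s' τ = ∅) :
    ∃ F : Info → State, ∀ p ∈ R, F p.2 = p.1 := by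
  classical
  refine ⟨fun i => if h : ∃ s, (s, i) ∈ R then h.choose else Classical.arbitrary State,
    fun p hp => ?_⟩
  have h : ∃ s, (s, p.2) ∈ R := ⟨p.1, hp⟩
  simp only [dif_pos h]
  by_contra hne
  obtain ⟨τ, hτ⟩ := hsep _ _ hne
  have h1 := hcorr _ h.choose_spec τ
  have h2 := hcorr _ hp τ
  have : B p.2 τ ∈ Sol h.choose τ ∩ Sol p.1 τ := ⟨h1, h2⟩
  rw [hτ] at this
  exact this
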